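/- arXiv:1307.1532 — 4 statements merged into one kernel-verified Lean document; each statement's English description precedes it below -/
import Mathlib

section
/- Let I be an independent set of the L×L toric grid (L even) and let R be a connected component of the set R_O(I) = I^O ∪ (E ∖ I^E), where I^O = I ∩ O and I^E = I ∩ E. Then the number of edges with exactly one endpoint in R equals 4(|R ∩ E| − |R ∩ O|). -/
open scoped Classical

/-- The toric grid: vertex set `(ZMod L) × (ZMod L)`, with an edge between two
vertices iff they differ by `±1 (mod L)` in exactly one coordinate. -/
def torus (L : ℕ) : SimpleGraph (ZMod L × ZMod L) :=
  SimpleGraph.fromRel (fun u v =>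
    (u.1 = v.1 ∧ u.2 = v.2 + 1) ∨ (u.2 = v.2 ∧ u.1 = v.1 + 1))

/-- A vertex of the toric grid is even if its coordinate sum is even. -/
def isEvenVertex {L : ℕ} [NeZero L] (v : ZMod L × ZMod L) : Prop :=
  Even (v.1.val + v.2.val)

/-- The even class `E`. -/
noncomputable def evenClass (L : ℕ) [NeZero L] : Finset (ZMod L × ZMod L) :=
  Finset.univ.filter (fun v => isEvenVertex v)

/-- The odd class `O`. -/
noncomputable def oddClass (L : ℕ) [NeZero L] : Finset (ZMod L × ZMod L) :=
  Finset.univ.filter (fun v => ¬ isEvenVertex v)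

/-- `R_O(I) = (I ∩ O) ∪ (E ∖ I)`. -/
noncomputable def RO (L : ℕ) [NeZero L] (I : Finset (ZMod L × ZMod L)) :
    Finset (ZMod L × ZMod L) :=
  (I ∩ oddClass L) ∪ (evenClass L \ I)

/-- `|∇S|`: the number of edges of the toric grid with exactly one endpoint in
`S`, counted as ordered pairs `(u,v)` with `u ∈ S`, `v ∉ S`, `u ~ v` (each cut
edge is counted exactly once this way). -/
noncomputable def cutCard (L : ℕ) [NeZero L] (S : Finset (ZMod L × ZMod L)) : ℕ :=
  (Finset.univ.filter
    (fun p : (ZMod L × ZMod L) × (ZMod L × ZMod L) =>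
      p.1 ∈ S ∧ p.2 ∉ S ∧ (torus L).Adj p.1 p.2)).card

/-- `R` is a connected component of `R_O(I)`: it is a nonempty subset of
`R_O(I)`, closed under adjacency within `R_O(I)`, and connected in the induced
subgraph. -/
def IsComponent (L : ℕ) [NeZero L] (I R : Finset (ZMod L × ZMod L)) : Prop :=
  R.Nonempty ∧ R ⊆ RO L I ∧
  (∀ v ∈ R, ∀ w ∈ RO L I, (torus L).Adj v w → w ∈ R) ∧
  ((torus L).induce (↑R : Set (ZMod L × ZMod L))).Connected

section Helpers
open Finset

lemma torus_adj_iff {L : ℕ} (u v : ZMod L × ZMod L) :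
    (torus L).Adj u v ↔ u ≠ v ∧
      ((u.1 = v.1 ∧ u.2 = v.2 + 1) ∨ (u.2 = v.2 ∧ u.1 = v.1 + 1) ∨
       (v.1 = u.1 ∧ v.2 = u.2 + 1) ∨ (v.2 = u.2 ∧ v.1 = u.1 + 1)) := by
  simp only [torus, SimpleGraph.fromRel_adj]
  tauto

lemma val_add_one_even {L : ℕ} [NeZero L] (hL2 : 2 ≤ L) (hLe : Even L) (a : ZMod L) :
    Even ((a + 1).val) ↔ ¬ Even a.val := by
  haveI : Fact (1 < L) := ⟨hL2⟩
  have h : (a + 1).val = (a.val + 1) % L := by rw [ZMod.val_add, ZMod.val_one]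
  rw [h, Nat.even_iff, Nat.mod_mod_of_dvd _ hLe.two_dvd, ← Nat.even_iff,
    Nat.even_add_one]

lemma adj_parity {L : ℕ} [NeZero L] (hL2 : 2 ≤ L) (hLe : Even L)
    {u v : ZMod L × ZMod L} (h : (torus L).Adj u v) :
    (isEvenVertex u ↔ ¬ isEvenVertex v) := by
  have key : ∀ c : ℕ, ∀ a : ZMod L, Even (c + (a + 1).val) ↔ ¬ Even (c + a.val) := by
    intro c a
    have := val_add_one_even hL2 hLe a
    rw [Nat.even_add, Nat.even_add]
    tauto
  have key2 : ∀ c : ℕ, ∀ a : ZMod L, Even ((a + 1).val + c) ↔ ¬ Even (a.val + c) := by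
    intro c a
    rw [add_comm, add_comm a.val c]; exact key c a
  rw [torus_adj_iff] at h
  unfold isEvenVertex
  obtain ⟨-, (⟨h1, h2⟩ | ⟨h1, h2⟩ | ⟨h1, h2⟩ | ⟨h1, h2⟩)⟩ := h
  · rw [h1, h2]; exact key _ _
  · rw [h1, h2]; exact key2 _ _
  · rw [h1, h2]; have := key u.1.val u.2; tauto
  · rw [h1, h2]; have := key2 u.2.val u.1; tauto

lemma torus_adj_mem {L : ℕ} [NeZero L] (hL : 4 ≤ L) (u v : ZMod L × ZMod L) :
    (torus L).Adj u v ↔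
      v ∈ ({(u.1, u.2 + 1), (u.1, u.2 - 1), (u.1 + 1, u.2), (u.1 - 1, u.2)} :
        Finset (ZMod L × ZMod L)) := by
  haveI : Fact (1 < L) := ⟨by omega⟩
  have h1 : (1 : ZMod L) ≠ 0 := one_ne_zero
  rw [torus_adj_iff]
  simp only [Finset.mem_insert, Finset.mem_singleton, Prod.ext_iff, Ne]
  constructor
  · rintro ⟨hne, (⟨a, b⟩ | ⟨a, b⟩ | ⟨a, b⟩ | ⟨a, b⟩)⟩
    · exact Or.inr (Or.inl ⟨a.symm, by rw [b]; ring⟩)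
    · exact Or.inr (Or.inr (Or.inr ⟨by rw [b]; ring, a.symm⟩))
    · exact Or.inl ⟨a, b⟩
    · exact Or.inr (Or.inr (Or.inl ⟨b, a⟩))
  · rintro (⟨a, b⟩ | ⟨a, b⟩ | ⟨a, b⟩ | ⟨a, b⟩)
    · refine ⟨fun h => ?_, Or.inr (Or.inr (Or.inl ⟨a, b⟩))⟩
      exact h1 (by linear_combination -h.2 - b)
    · refine ⟨fun h => ?_, Or.inl ⟨a.symm, by rw [b]; ring⟩⟩
      exact h1 (by linear_combination h.2 + b)
    · refine ⟨fun h => ?_, Or.inr (Or.inr (Or.inr ⟨b, a⟩))⟩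
      exact h1 (by linear_combination -h.1 - a)
    · refine ⟨fun h => ?_, Or.inr (Or.inl ⟨b.symm, by rw [a]; ring⟩)⟩
      exact h1 (by linear_combination h.1 + a)

lemma torus_degree {L : ℕ} [NeZero L] (hL : 4 ≤ L) (u : ZMod L × ZMod L) :
    (Finset.univ.filter (fun v => (torus L).Adj u v)).card = 4 := by
  haveI : Fact (1 < L) := ⟨by omega⟩
  have h1 : (1 : ZMod L) ≠ 0 := one_ne_zero
  have h2 : (2 : ZMod L) ≠ 0 := by
    have : ((2 : ℕ) : ZMod L) ≠ 0 := by
      rw [Ne, ZMod.natCast_eq_zero_iff]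
      exact fun hd => by have := Nat.le_of_dvd (by norm_num) hd; omega
    simpa using this
  have hset : (Finset.univ.filter (fun v => (torus L).Adj u v)) =
      ({(u.1, u.2 + 1), (u.1, u.2 - 1), (u.1 + 1, u.2), (u.1 - 1, u.2)} :
        Finset (ZMod L × ZMod L)) := by
    ext v; simp [torus_adj_mem hL]
  have d12 : (u.1, u.2 + 1) ≠ (u.1, u.2 - 1) := by
    intro h; rw [Prod.mk.injEq] at h; exact h2 (by linear_combination h.2)
  have d13 : (u.1, u.2 + 1) ≠ (u.1 + 1, u.2) := by
    intro h; rw [Prod.mk.injEq] at h; exact h1 (by linear_combination -h.1)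
  have d14 : (u.1, u.2 + 1) ≠ (u.1 - 1, u.2) := by
    intro h; rw [Prod.mk.injEq] at h; exact h1 (by linear_combination h.1)
  have d23 : (u.1, u.2 - 1) ≠ (u.1 + 1, u.2) := by
    intro h; rw [Prod.mk.injEq] at h; exact h1 (by linear_combination -h.1)
  have d24 : (u.1, u.2 - 1) ≠ (u.1 - 1, u.2) := by
    intro h; rw [Prod.mk.injEq] at h; exact h1 (by linear_combination h.1)
  have d34 : (u.1 + 1, u.2) ≠ (u.1 - 1, u.2) := by
    intro h; rw [Prod.mk.injEq] at h; exact h2 (by linear_combination h.1)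
  rw [hset, Finset.card_insert_of_notMem (by simp [d12, d13, d14]),
    Finset.card_insert_of_notMem (by simp [d23, d24]),
    Finset.card_insert_of_notMem (by simp [d34]), Finset.card_singleton]

lemma card_pairs {α : Type*} [Fintype α] [DecidableEq α] (S : Finset α)
    (P : α → α → Prop) :
    (Finset.univ.filter (fun p : α × α => p.1 ∈ S ∧ P p.1 p.2)).card
      = ∑ u ∈ S, (Finset.univ.filter (fun v => P u v)).card := by
  classical
  have : (Finset.univ.filter (fun p : α × α => p.1 ∈ S ∧ P p.1 p.2))
      = S.biUnion (fun u => ({u} : Finset α) ×ˢ Finset.univ.filter (fun v => P u v)) := by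
    ext p
    simp only [Finset.mem_filter, Finset.mem_univ, true_and, Finset.mem_biUnion,
      Finset.mem_product, Finset.mem_singleton]
    constructor
    · rintro ⟨h1, h2⟩; exact ⟨p.1, h1, rfl, h2⟩
    · rintro ⟨u, hu, rfl, h⟩; exact ⟨hu, h⟩
  rw [this, Finset.card_biUnion]
  · apply Finset.sum_congr rfl
    intro u _
    rw [Finset.card_product, Finset.card_singleton, one_mul]
  · intro u _ w _ huw
    simp only [Finset.disjoint_left, Finset.mem_product, Finset.mem_singleton]
    rintro p ⟨rfl, -⟩ ⟨h, -⟩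
    exact huw h

end Helpers

open Finset in
/-- For an independent set `I` of the `L×L` toric grid (`L ≥ 4`
even) and a connected component `R` of `R_O(I)`, the number of edges with
exactly one endpoint in `R` equals `4(|R ∩ E| − |R ∩ O|)`. -/
theorem stmt_3 (L : ℕ) [NeZero L] (hL : 4 ≤ L) (hLeven : Even L)
    (I R : Finset (ZMod L × ZMod L))
    (hI : ∀ u ∈ I, ∀ v ∈ I, ¬ (torus L).Adj u v)
    (hR : IsComponent L I R) :
    (cutCard L R : ℤ) =
      4 * (((R ∩ evenClass L).card : ℤ) - ((R ∩ oddClass L).card : ℤ)) := by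
  classical
  obtain ⟨-, hRsub, hClose, -⟩ := hR
  have hL2 : 2 ≤ L := by omega
  -- Step A: odd vertices of R have all their neighbors in R
  have hOdd : ∀ v ∈ R, ¬ isEvenVertex v → ∀ w, (torus L).Adj v w → w ∈ R := by
    intro v hv hodd w hadj
    have hvRO := hRsub hv
    have hvI : v ∈ I := by
      rcases Finset.mem_union.1 hvRO with h | h
      · exact (Finset.mem_inter.1 h).1
      · exact absurd (Finset.mem_filter.1 (Finset.mem_sdiff.1 h).1).2 hodd
    have hwEven : isEvenVertex w := by
      have := adj_parity hL2 hLeven hadj; tauto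
    have hwI : w ∉ I := fun hw => hI v hvI w hw hadj
    have hwRO : w ∈ RO L I := Finset.mem_union.2 (Or.inr (Finset.mem_sdiff.2
      ⟨Finset.mem_filter.2 ⟨Finset.mem_univ _, hwEven⟩, hwI⟩))
    exact hClose v hv w hwRO hadj
  -- out/in neighbor counts
  set out : (ZMod L × ZMod L) → ℕ :=
    fun u => (Finset.univ.filter (fun v => v ∉ R ∧ (torus L).Adj u v)).card with hout
  set inn : (ZMod L × ZMod L) → ℕ :=
    fun u => (Finset.univ.filter (fun v => v ∈ R ∧ (torus L).Adj u v)).card with hinn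
  have key1 : ∀ u ∈ R, ¬ isEvenVertex u → out u = 0 := by
    intro u hu hodd
    rw [hout]
    simp only [Finset.card_eq_zero, Finset.filter_eq_empty_iff]
    intro v _
    rintro ⟨hvR, hadj⟩
    exact hvR (hOdd u hu hodd v hadj)
  have key3 : ∀ u ∈ R, ¬ isEvenVertex u → inn u = 4 := by
    intro u hu hodd
    rw [hinn]
    have : (Finset.univ.filter (fun v => v ∈ R ∧ (torus L).Adj u v))
        = Finset.univ.filter (fun v => (torus L).Adj u v) := by
      ext v
      simp only [Finset.mem_filter, Finset.mem_univ, true_and]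
      exact ⟨fun h => h.2, fun h => ⟨hOdd u hu hodd v h, h⟩⟩
    simp only [this]
    exact torus_degree hL u
  have key2 : ∀ u, out u + inn u = 4 := by
    intro u
    have h1 : (Finset.univ.filter (fun v => v ∈ R ∧ (torus L).Adj u v))
        = (Finset.univ.filter (fun v => (torus L).Adj u v)).filter (fun v => v ∈ R) := by
      rw [Finset.filter_filter]; ext v; simp only [Finset.mem_filter]; tauto
    have h2 : (Finset.univ.filter (fun v => v ∉ R ∧ (torus L).Adj u v))
        = (Finset.univ.filter (fun v => (torus L).Adj u v)).filter (fun v => v ∉ R) := by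
      rw [Finset.filter_filter]; ext v; simp only [Finset.mem_filter]; tauto
    rw [hout, hinn]
    simp only [h1, h2]
    rw [add_comm, Finset.card_filter_add_card_filter_not]
    exact torus_degree hL u
  -- cut = sum of out over R
  have hsum : cutCard L R = ∑ u ∈ R, out u := by
    rw [cutCard, hout]
    convert card_pairs R (fun u v => v ∉ R ∧ (torus L).Adj u v) using 2 <;> first | rfl | congr!
  -- split R by parity
  have hRE : R ∩ evenClass L = R.filter (fun v => isEvenVertex v) := by
    ext v; simp [evenClass, Finset.mem_filter, Finset.mem_inter]
  have hRO' : R ∩ oddClass L = R.filter (fun v => ¬ isEvenVertex v) := by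
    ext v; simp [oddClass, Finset.mem_filter, Finset.mem_inter]
  have hcut : cutCard L R = ∑ u ∈ R.filter (fun v => isEvenVertex v), out u := by
    rw [hsum, ← Finset.sum_filter_add_sum_filter_not R (fun v => isEvenVertex v)]
    have : ∑ u ∈ R.filter (fun v => ¬ isEvenVertex v), out u = 0 :=
      Finset.sum_eq_zero fun u hu => by
        have h := Finset.mem_filter.1 hu
        exact key1 u h.1 h.2
    omega
  -- sum of (out+inn) over even part
  have hEq1 : ∑ u ∈ R.filter (fun v => isEvenVertex v), out u
      + ∑ u ∈ R.filter (fun v => isEvenVertex v), inn u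
      = 4 * (R.filter (fun v => isEvenVertex v)).card := by
    rw [← Finset.sum_add_distrib]
    rw [Finset.sum_congr rfl (fun u _ => key2 u), Finset.sum_const, smul_eq_mul, mul_comm]
  -- swap argument
  have hEq2 : ∑ u ∈ R.filter (fun v => isEvenVertex v), inn u
      = 4 * (R.filter (fun v => ¬ isEvenVertex v)).card := by
    have hP1 : ∑ u ∈ R.filter (fun v => isEvenVertex v), inn u
        = (Finset.univ.filter (fun p : (ZMod L × ZMod L) × (ZMod L × ZMod L) =>
            p.1 ∈ R.filter (fun v => isEvenVertex v) ∧ p.2 ∈ R ∧ (torus L).Adj p.1 p.2)).card := by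
      rw [hinn]
      convert (card_pairs (R.filter (fun v => isEvenVertex v))
        (fun u v => v ∈ R ∧ (torus L).Adj u v)).symm using 2 <;> first | rfl | congr!
    have hswap : (Finset.univ.filter (fun p : (ZMod L × ZMod L) × (ZMod L × ZMod L) =>
            p.1 ∈ R.filter (fun v => isEvenVertex v) ∧ p.2 ∈ R ∧ (torus L).Adj p.1 p.2)).card
        = (Finset.univ.filter (fun p : (ZMod L × ZMod L) × (ZMod L × ZMod L) =>
            p.1 ∈ R.filter (fun v => ¬ isEvenVertex v) ∧ p.2 ∈ R ∧ (torus L).Adj p.1 p.2)).card := by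
      refine Finset.card_bij' (fun p _ => p.swap) (fun p _ => p.swap) ?_ ?_ ?_ ?_
      · intro p hp
        simp only [Finset.mem_filter, Finset.mem_univ, true_and] at hp ⊢
        obtain ⟨⟨h1R, h1E⟩, h2R, hadj⟩ := hp
        have h2odd : ¬ isEvenVertex p.2 := by
          have := adj_parity hL2 hLeven hadj; tauto
        exact ⟨⟨h2R, h2odd⟩, h1R, hadj.symm⟩
      · intro p hp
        simp only [Finset.mem_filter, Finset.mem_univ, true_and] at hp ⊢
        obtain ⟨⟨h1R, h1O⟩, h2R, hadj⟩ := hp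
        have h2even : isEvenVertex p.2 := by
          have := adj_parity hL2 hLeven hadj.symm; tauto
        exact ⟨⟨h2R, h2even⟩, h1R, hadj.symm⟩
      · intro p _; exact Prod.swap_swap p
      · intro p _; exact Prod.swap_swap p
    have hP2 : (Finset.univ.filter (fun p : (ZMod L × ZMod L) × (ZMod L × ZMod L) =>
            p.1 ∈ R.filter (fun v => ¬ isEvenVertex v) ∧ p.2 ∈ R ∧ (torus L).Adj p.1 p.2)).card
        = ∑ u ∈ R.filter (fun v => ¬ isEvenVertex v), inn u := by
      rw [hinn]
      convert card_pairs (R.filter (fun v => ¬ isEvenVertex v))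
        (fun u v => v ∈ R ∧ (torus L).Adj u v) using 2 <;> first | rfl | congr!
    rw [hP1, hswap, hP2]
    rw [Finset.sum_congr rfl (fun u hu => key3 u (Finset.mem_filter.1 hu).1
      (Finset.mem_filter.1 hu).2), Finset.sum_const, smul_eq_mul, mul_comm]
  rw [hRE, hRO']
  omega
end

section
/- For any independent set I of the L×L toric grid (L even), the total contour length l(I) = ∑_R |∇R|, summed over the connected components R of R_O(I) = (I∩O) ∪ (E∖I), equals 4·Δ(I), where Δ(I) = L^2/2 − |I| is the efficiency gap of I. -/
/-!
A component `R` of `R_O(I)` is closed under adjacency inside `R_O(I)`, so every edge leaving `R`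
leaves `R_O(I)`; as the components partition `R_O(I)`, the contour lengths add up to
`|∇R_O(I)|`. Now `R_O(I) = I ∆ E`, and in a `d`-regular graph bipartite with sides `E`, `O` an
edge leaving `I ∆ E` must run from `E ∖ I` to `O ∖ I`, because `I` is independent. Sorting the
`d |E ∖ I|` edges at `E ∖ I` by whether their odd end lies in `I`, and using that all `d`
neighbours of a vertex of `I ∩ O` lie in `E ∖ I`, gives `|∇(I ∆ E)| = d |E ∖ I| - d |I ∩ O|
= d (|E| - |I|)`. On the torus `d = 4` and `|E| = L² / 2`.
-/

open scoped Classical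

open Finset

namespace SimpleGraph

variable {V : Type*} {G : SimpleGraph V}

theorem Reachable.induce_of_closed {s t : Set V}
    (hcl : ∀ a b, a ∈ s → b ∈ s → G.Adj a b → a ∈ t → b ∈ t) {a b : s}
    (h : (G.induce s).Reachable a b) (ha : (a : V) ∈ t) :
    ∃ hb : (b : V) ∈ t, (G.induce t).Reachable ⟨a, ha⟩ ⟨b, hb⟩ := by
  obtain ⟨p⟩ := h
  induction p with
  | nil => exact ⟨ha, .rfl⟩
  | @cons a c b hac _ ih =>
    have hc : (c : V) ∈ t := hcl a c a.2 c.2 (by simpa using hac) ha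
    obtain ⟨hb, hcb⟩ := ih hc
    exact ⟨hb, (Adj.reachable (show (G.induce t).Adj ⟨a, ha⟩ ⟨c, hc⟩ by simpa using hac)).trans hcb⟩

variable (G) in
def IsComponentOf (S R : Finset V) : Prop :=
  R.Nonempty ∧ R ⊆ S ∧ (∀ v ∈ R, ∀ w ∈ S, G.Adj v w → w ∈ R) ∧
    (G.induce (R : Set V)).Connected

variable (G) in
def cutPairs [Fintype V] [DecidableEq V] [DecidableRel G.Adj] (S : Finset V) : Finset (V × V) :=
  univ.filter fun p => p.1 ∈ S ∧ p.2 ∉ S ∧ G.Adj p.1 p.2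

section Components

variable {S R R' : Finset V} {v : V}

theorem IsComponentOf.subset_of_mem (hR : G.IsComponentOf S R) (hR' : G.IsComponentOf S R')
    (hv : v ∈ R) (hv' : v ∈ R') : R ⊆ R' := fun w hw =>
  ((hR.2.2.2.preconnected ⟨v, hv⟩ ⟨w, hw⟩).induce_of_closed
    (fun _ b _ hb hab ha => hR'.2.2.1 _ ha b (hR.2.1 hb) hab) hv').1

theorem IsComponentOf.eq_of_mem (hR : G.IsComponentOf S R) (hR' : G.IsComponentOf S R')
    (hv : v ∈ R) (hv' : v ∈ R') : R = R' :=
  (hR.subset_of_mem hR' hv hv').antisymm (hR'.subset_of_mem hR hv' hv)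

theorem exists_isComponentOf_mem [Fintype V] (hv : v ∈ S) :
    ∃ R, G.IsComponentOf S R ∧ v ∈ R := by
  let R : Finset V := univ.filter fun w =>
    ∃ hw : w ∈ S, (G.induce (S : Set V)).Reachable ⟨v, hv⟩ ⟨w, hw⟩
  have hvR : v ∈ R := by simp [R, hv]
  have hRS : R ⊆ S := fun w hw => (mem_filter.1 hw).2.1
  have hcl : ∀ a ∈ R, ∀ b ∈ S, G.Adj a b → b ∈ R := by
    intro a ha b hb hab
    simp only [R, mem_filter, mem_univ, true_and] at ha ⊢
    obtain ⟨ha, hva⟩ := ha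
    exact ⟨hb, hva.trans (Adj.reachable (by simpa using hab))⟩
  refine ⟨R, ⟨⟨v, hvR⟩, hRS, hcl, (connected_iff _).2 ⟨?_, ⟨⟨v, hvR⟩⟩⟩⟩, hvR⟩
  rintro ⟨a, ha⟩ ⟨b, hb⟩
  obtain ⟨_, hva⟩ := (mem_filter.1 ha).2
  obtain ⟨_, hvb⟩ := (mem_filter.1 hb).2
  exact ((hva.symm.trans hvb).induce_of_closed (t := R)
    (fun a b _ hb hab ha => hcl a ha b hb hab) ha).2

variable [Fintype V] [DecidableEq V] [DecidableRel G.Adj]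

theorem IsComponentOf.cutPairs_eq (hR : G.IsComponentOf S R) :
    G.cutPairs R = (G.cutPairs S).filter (·.1 ∈ R) := by
  ext ⟨a, b⟩
  simp only [cutPairs, mem_filter, mem_univ, true_and]
  exact ⟨fun ⟨ha, hb, hab⟩ => ⟨⟨hR.2.1 ha, fun hbS => hb (hR.2.2.1 a ha b hbS hab), hab⟩, ha⟩,
    fun ⟨⟨_, hb, hab⟩, ha⟩ => ⟨ha, fun hbR => hb (hR.2.1 hbR), hab⟩⟩

theorem sum_card_cutPairs_isComponentOf (S : Finset V) :
    ∑ R ∈ univ.filter (G.IsComponentOf S), #(G.cutPairs R) = #(G.cutPairs S) := by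
  rw [sum_congr rfl fun R hR => congrArg card (mem_filter.1 hR).2.cutPairs_eq,
    ← card_biUnion]
  · congr 1
    ext p
    simp only [mem_biUnion, mem_filter, mem_univ, true_and]
    refine ⟨fun ⟨_, _, hp, _⟩ => hp, fun hp => ?_⟩
    obtain ⟨R, hR, hpR⟩ := exists_isComponentOf_mem (G := G) (mem_filter.1 hp).2.1
    exact ⟨R, hR, hp, hpR⟩
  · intro R hR R' hR' hne
    simp only [coe_filter, mem_univ, true_and] at hR hR'
    exact disjoint_filter.2 fun p _ hp hp' => hne (hR.eq_of_mem hR' hp hp')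

end Components

section Counting

variable [Fintype V] [DecidableEq V] [DecidableRel G.Adj] {d : ℕ}

theorem IsRegularOfDegree.card_adj_fst_mem (hreg : G.IsRegularOfDegree d) (A : Finset V) :
    #{p : V × V | p.1 ∈ A ∧ G.Adj p.1 p.2} = d * #A := by
  rw [card_eq_sum_card_fiberwise (f := Prod.fst) (t := A) fun p hp => (mem_filter.1 hp).2.1,
    mul_comm, ← smul_eq_mul, ← sum_const]
  refine sum_congr rfl fun u hu => ?_
  rw [← hreg u, ← card_neighborFinset_eq_degree, ← card_map (Function.Embedding.sectR u V)]
  congr 1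
  ext ⟨a, b⟩
  simp only [mem_filter, mem_univ, true_and, mem_map, mem_neighborFinset,
    Function.Embedding.sectR_apply, Prod.mk.injEq]
  constructor
  · rintro ⟨⟨-, hab⟩, rfl⟩; exact ⟨b, hab, rfl, rfl⟩
  · rintro ⟨b, hab, rfl, rfl⟩; exact ⟨⟨hu, hab⟩, rfl⟩

theorem IsRegularOfDegree.card_adj_snd_mem (hreg : G.IsRegularOfDegree d) (A : Finset V) :
    #{p : V × V | p.2 ∈ A ∧ G.Adj p.1 p.2} = d * #A := by
  rw [← hreg.card_adj_fst_mem A]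
  exact card_equiv (Equiv.prodComm V V) fun p => by simp [G.adj_comm]

theorem card_cutPairs_symmDiff_add_mul_card (hreg : G.IsRegularOfDegree d) {E I : Finset V}
    (hbip : G.IsBipartiteWith E (↑E)ᶜ) (hI : G.IsIndepSet I) :
    #(G.cutPairs (symmDiff I E)) + d * #I = d * #E := by
  have hE : ∀ {u v}, G.Adj u v → (u ∈ E ↔ v ∉ E) := fun huv => by
    rcases hbip.mem_of_adj huv with h | h <;> simp_all
  have hIadj : ∀ {u v}, u ∈ I → v ∈ I → ¬ G.Adj u v := fun hu hv huv => hI hu hv huv.ne huv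
  set A : Finset (V × V) := {p | p.1 ∈ E \ I ∧ G.Adj p.1 p.2}
  have hsplit := card_filter_add_card_filter_not (s := A) (fun p => p.2 ∈ I)
  have hinto : A.filter (·.2 ∈ I) = ({p | p.2 ∈ I \ E ∧ G.Adj p.1 p.2} : Finset (V × V)) := by
    ext ⟨u, v⟩
    simp only [A, mem_filter, mem_univ, true_and, mem_sdiff]
    constructor
    · rintro ⟨⟨⟨hu, -⟩, huv⟩, hv⟩; exact ⟨⟨hv, (hE huv).1 hu⟩, huv⟩
    · rintro ⟨⟨hv, hvE⟩, huv⟩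
      exact ⟨⟨⟨(hE huv).2 hvE, fun hu => hIadj hu hv huv⟩, huv⟩, hv⟩
  have hout : A.filter (·.2 ∉ I) = G.cutPairs (symmDiff I E) := by
    ext ⟨u, v⟩
    simp only [A, cutPairs, mem_filter, mem_univ, true_and, mem_sdiff, mem_symmDiff]
    constructor
    · rintro ⟨⟨⟨hu, huI⟩, huv⟩, hv⟩
      exact ⟨Or.inr ⟨hu, huI⟩, by have := (hE huv).1 hu; tauto, huv⟩
    · rintro ⟨hu | hu, hv, huv⟩
      · have hvE : v ∈ E := by_contra fun h => hu.2 ((hE huv).2 h)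
        exact absurd huv (hIadj hu.1 (by_contra fun h => hv (Or.inr ⟨hvE, h⟩)))
      · exact ⟨⟨hu, huv⟩, fun hvI => hv (Or.inl ⟨hvI, (hE huv).1 hu.1⟩)⟩
  rw [hinto, hout, hreg.card_adj_snd_mem, hreg.card_adj_fst_mem] at hsplit
  rw [← card_sdiff_add_card_inter E I, ← card_sdiff_add_card_inter I E, inter_comm]
  linarith

end Counting

end SimpleGraph

section Torus

variable {L : ℕ}

def torusSteps (L : ℕ) : Finset (ZMod L × ZMod L) := {(0, 1), (0, -1), (1, 0), (-1, 0)}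

theorem sub_mem_torusSteps_of_adj {u v : ZMod L × ZMod L} (huv : (torus L).Adj u v) :
    v - u ∈ torusSteps L := by
  obtain ⟨-, (⟨h₁, h₂⟩ | ⟨h₁, h₂⟩) | (⟨h₁, h₂⟩ | ⟨h₁, h₂⟩)⟩ := huv <;>
    simp [torusSteps, Prod.ext_iff, h₁, h₂]

theorem torus_adj_iff_s4 (h1 : (1 : ZMod L) ≠ 0) {u v : ZMod L × ZMod L} :
    (torus L).Adj u v ↔ v - u ∈ torusSteps L := by
  refine ⟨sub_mem_torusSteps_of_adj, fun h => ?_⟩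
  obtain ⟨a, b⟩ := u
  obtain ⟨c, e⟩ := v
  simp only [torus, SimpleGraph.fromRel_adj, torusSteps, mem_insert, mem_singleton, Prod.ext_iff,
    Prod.mk_sub_mk, ne_eq] at h ⊢
  grind

theorem ZMod.one_ne_zero_of_two_le (hL : 2 ≤ L) : (1 : ZMod L) ≠ 0 :=
  have : Fact (1 < L) := ⟨hL⟩
  one_ne_zero

theorem card_torusSteps (hL : 3 ≤ L) : #(torusSteps L) = 4 := by
  have h1 : (1 : ZMod L) ≠ 0 := ZMod.one_ne_zero_of_two_le (by omega)
  have h2 : (1 : ZMod L) ≠ -1 := by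
    rw [Ne, ← sub_eq_zero, sub_neg_eq_add, one_add_one_eq_two, ← Nat.cast_ofNat,
      ZMod.natCast_eq_zero_iff]
    exact fun h => by have := Nat.le_of_dvd two_pos h; omega
  simp [torusSteps, Prod.ext_iff, h1, h2]

def torusParity (hL : 2 ∣ L) : ZMod L × ZMod L →+ ZMod 2 :=
  let φ := (ZMod.castHom hL (ZMod 2)).toAddMonoidHom
  φ.coprod φ

theorem torusParity_of_mem_torusSteps (hL : 2 ∣ L) {w : ZMod L × ZMod L} (hw : w ∈ torusSteps L) :
    torusParity hL w = 1 := by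
  simp only [torusSteps, mem_insert, mem_singleton] at hw
  rcases hw with rfl | rfl | rfl | rfl <;>
    simp only [torusParity, AddMonoidHom.coprod_apply, RingHom.toAddMonoidHom_eq_coe,
      AddMonoidHom.coe_coe, map_one, map_neg, map_zero] <;> decide

variable [NeZero L]

theorem torus_isRegularOfDegree_four (hL : 3 ≤ L) : (torus L).IsRegularOfDegree 4 := by
  intro u
  rw [← SimpleGraph.card_neighborFinset_eq_degree, ← card_torusSteps hL,
    ← card_map (addLeftEmbedding u) (s := torusSteps L)]
  congr 1
  ext v
  rw [SimpleGraph.mem_neighborFinset, torus_adj_iff_s4 (ZMod.one_ne_zero_of_two_le (by omega)), mem_map]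
  simp only [addLeftEmbedding_apply]
  exact ⟨fun h => ⟨_, h, add_sub_cancel u v⟩, by rintro ⟨w, hw, rfl⟩; simpa using hw⟩

theorem torusParity_apply (hL : 2 ∣ L) (v : ZMod L × ZMod L) :
    torusParity hL v = ((v.1.val + v.2.val : ℕ) : ZMod 2) := by
  simp only [torusParity, AddMonoidHom.coprod_apply, RingHom.toAddMonoidHom_eq_coe,
    AddMonoidHom.coe_coe, ZMod.castHom_apply, ZMod.cast_eq_val, Nat.cast_add]

theorem isEvenVertex_iff_torusParity_eq_zero (hL : 2 ∣ L) (v : ZMod L × ZMod L) :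
    isEvenVertex v ↔ torusParity hL v = 0 := by
  rw [isEvenVertex, torusParity_apply, ZMod.natCast_eq_zero_iff_even]

theorem isEvenVertex_add_torusSteps (hL : 2 ∣ L) (v : ZMod L × ZMod L) {w : ZMod L × ZMod L}
    (hw : w ∈ torusSteps L) : isEvenVertex (v + w) ↔ ¬ isEvenVertex v := by
  simp only [isEvenVertex_iff_torusParity_eq_zero hL, map_add, torusParity_of_mem_torusSteps hL hw]
  generalize torusParity hL v = x
  revert x
  decide

theorem torus_isBipartiteWith (hL : Even L) :
    (torus L).IsBipartiteWith ↑(evenClass L) (↑(evenClass L))ᶜ where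
  disjoint := disjoint_compl_right
  mem_of_adj u v huv := by
    have := isEvenVertex_add_torusSteps (even_iff_two_dvd.1 hL) u (sub_mem_torusSteps_of_adj huv)
    simp only [evenClass, coe_filter, mem_univ, true_and, Set.mem_compl_iff, Set.mem_ofPred_eq,
      add_sub_cancel] at this ⊢
    tauto

theorem card_evenClass (hL : Even L) : #(evenClass L) = L ^ 2 / 2 := by
  have hodd : #(evenClass L) = #(oddClass L) :=
    card_equiv (Equiv.addRight ((0, 1) : ZMod L × ZMod L)) fun v => by
      simp [evenClass, oddClass, isEvenVertex_add_torusSteps (even_iff_two_dvd.1 hL) v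
        (show ((0, 1) : ZMod L × ZMod L) ∈ torusSteps L by simp [torusSteps])]
  have htotal : #(evenClass L) + #(oddClass L) = L ^ 2 := by
    rw [evenClass, oddClass, card_filter_add_card_filter_not, card_univ, Fintype.card_prod,
      ZMod.card, sq]
  omega

theorem RO_eq_symmDiff (I : Finset (ZMod L × ZMod L)) : RO L I = symmDiff I (evenClass L) := by
  ext v
  simp only [RO, evenClass, oddClass, mem_union, mem_inter, mem_sdiff, mem_symmDiff, mem_filter,
    mem_univ, true_and]

end Torus

/-- For any independent set `I` of the `L×L` toric grid (`L ≥ 4`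
even), the total contour length `l(I) = ∑_R |∇R|`, summed over the connected
components `R` of `R_O(I)`, equals `4·Δ(I)` where `Δ(I) = L²/2 − |I|`. -/
theorem stmt_4 (L : ℕ) [NeZero L] (hL : 4 ≤ L) (hLeven : Even L)
    (I : Finset (ZMod L × ZMod L))
    (hI : ∀ u ∈ I, ∀ v ∈ I, ¬ (torus L).Adj u v) :
    ∑ R ∈ Finset.univ.filter (fun R => IsComponent L I R), cutCard L R =
      4 * (L ^ 2 / 2 - I.card) := by
  have hsum : ∑ R ∈ Finset.univ.filter (fun R => IsComponent L I R), cutCard L R =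
      #((torus L).cutPairs (RO L I)) :=
    (torus L).sum_card_cutPairs_isComponentOf (RO L I)
  have hcount := SimpleGraph.card_cutPairs_symmDiff_add_mul_card
    (torus_isRegularOfDegree_four (by omega)) (torus_isBipartiteWith hLeven)
    (I := I) fun u hu v hv _ => hI u hu v hv
  rw [← RO_eq_symmDiff, card_evenClass hLeven] at hcount
  omega
end

section
/- In the L×L toric grid (L ≥ 4 even), any closed curve in the dual torus that is non-contractible has length at least 2L; hence since each contour curve has an equal number of horizontal and vertical edges, each non-contractible contour curve has length at least 2L, and a stripe region, whose contour contains two disjoint non-contractible closed curves, has contour length |c_R| ≥ 4L. -/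
open scoped Classical

/-- A list of unit steps in the square lattice (a curve in the dual torus of
the `L×L` toric grid, encoded by its steps). -/
def UnitSteps (steps : List (ℤ × ℤ)) : Prop :=
  ∀ d ∈ steps, d = (1, 0) ∨ d = (-1, 0) ∨ d = (0, 1) ∨ d = (0, -1)

/-- The curve is closed in the torus with winding numbers `(w1, w2)`: the total
displacement is `(w1·L, w2·L)`. -/
def Winding (L : ℕ) (steps : List (ℤ × ℤ)) (w1 w2 : ℤ) : Prop :=
  (steps.map Prod.fst).sum = w1 * L ∧ (steps.map Prod.snd).sum = w2 * L

/-- The curve has an equal number of horizontal and vertical edges (as every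
contour curve does). -/
def BalancedSteps (steps : List (ℤ × ℤ)) : Prop :=
  (steps.filter (fun d => d.2 = 0)).length =
    (steps.filter (fun d => d.1 = 0)).length

/-!
A unit step changes the horizontal coordinate only if it is horizontal, and then by `±1`;
so a curve with horizontal displacement `w₁ L ≠ 0` has at least `L` horizontal steps, and
likewise vertically. A balanced non-contractible curve therefore has at least `L` steps of
each kind, hence length `≥ 2L`, and two of them have total length `≥ 4L`.
-/

namespace UnitSteps

variable {d : ℤ × ℤ} {steps : List (ℤ × ℤ)}

theorem of_cons (h : UnitSteps (d :: steps)) : UnitSteps steps :=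
  fun x hx => h x (List.mem_cons_of_mem d hx)

theorem natAbs_sum_fst_le (h : UnitSteps steps) :
    (steps.map Prod.fst).sum.natAbs ≤ (steps.filter (fun d => d.2 = 0)).length := by
  induction steps with
  | nil => simp
  | cons d l ih =>
    have := ih h.of_cons
    have := Int.natAbs_add_le d.1 (l.map Prod.fst).sum
    rcases h d List.mem_cons_self with rfl | rfl | rfl | rfl <;> simp <;> omega

theorem natAbs_sum_snd_le (h : UnitSteps steps) :
    (steps.map Prod.snd).sum.natAbs ≤ (steps.filter (fun d => d.1 = 0)).length := by
  induction steps with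
  | nil => simp
  | cons d l ih =>
    have := ih h.of_cons
    have := Int.natAbs_add_le d.2 (l.map Prod.snd).sum
    rcases h d List.mem_cons_self with rfl | rfl | rfl | rfl <;> simp <;> omega

theorem length_filter_add_length_filter_le (h : UnitSteps steps) :
    (steps.filter (fun d => d.2 = 0)).length + (steps.filter (fun d => d.1 = 0)).length
      ≤ steps.length := by
  induction steps with
  | nil => simp
  | cons d l ih =>
    have := ih h.of_cons
    rcases h d List.mem_cons_self with rfl | rfl | rfl | rfl <;> simp <;> omega

end UnitSteps

section Winding

variable {L : ℕ} {steps : List (ℤ × ℤ)} {w1 w2 : ℤ}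

theorem le_natAbs_mul_natCast {w : ℤ} (hw : w ≠ 0) : L ≤ (w * L).natAbs := by
  rw [Int.natAbs_mul, Int.natAbs_natCast]
  exact Nat.le_mul_of_pos_left L (Int.natAbs_pos.mpr hw)

theorem Winding.le_length_filter_horizontal (hu : UnitSteps steps)
    (hw : Winding L steps w1 w2) (h1 : w1 ≠ 0) :
    L ≤ (steps.filter (fun d => d.2 = 0)).length :=
  (le_natAbs_mul_natCast h1).trans (hw.1 ▸ hu.natAbs_sum_fst_le)

theorem Winding.le_length_filter_vertical (hu : UnitSteps steps)
    (hw : Winding L steps w1 w2) (h2 : w2 ≠ 0) :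
    L ≤ (steps.filter (fun d => d.1 = 0)).length :=
  (le_natAbs_mul_natCast h2).trans (hw.2 ▸ hu.natAbs_sum_snd_le)

theorem Winding.two_mul_le_length (hu : UnitSteps steps) (hw : Winding L steps w1 w2)
    (hnz : w1 ≠ 0 ∨ w2 ≠ 0) (hb : BalancedSteps steps) : 2 * L ≤ steps.length := by
  have hsum := hu.length_filter_add_length_filter_le
  unfold BalancedSteps at hb
  rcases hnz with h | h
  · have := hw.le_length_filter_horizontal hu h; omega
  · have := hw.le_length_filter_vertical hu h; omega

end Winding

theorem stmt_11_general (L : ℕ) :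
    (∀ (steps : List (ℤ × ℤ)) (w1 w2 : ℤ),
      UnitSteps steps → Winding L steps w1 w2 → (w1 ≠ 0 ∨ w2 ≠ 0) →
      ((w1 ≠ 0 → L ≤ (steps.filter (fun d => d.2 = 0)).length) ∧
       (w2 ≠ 0 → L ≤ (steps.filter (fun d => d.1 = 0)).length)) ∧
      (BalancedSteps steps → 2 * L ≤ steps.length)) ∧
    (∀ (s₁ s₂ : List (ℤ × ℤ)) (w1 w2 w1' w2' : ℤ) (cR : ℕ),
      UnitSteps s₁ → Winding L s₁ w1 w2 → (w1 ≠ 0 ∨ w2 ≠ 0) → BalancedSteps s₁ →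
      UnitSteps s₂ → Winding L s₂ w1' w2' → (w1' ≠ 0 ∨ w2' ≠ 0) → BalancedSteps s₂ →
      -- the contour of the stripe contains both disjoint curves
      s₁.length + s₂.length ≤ cR →
      4 * L ≤ cR) := by
  refine ⟨fun steps w1 w2 hu hw hnz =>
    ⟨⟨hw.le_length_filter_horizontal hu, hw.le_length_filter_vertical hu⟩,
      hw.two_mul_le_length hu hnz⟩, ?_⟩
  intro s₁ s₂ w1 w2 w1' w2' cR hu₁ hw₁ hnz₁ hb₁ hu₂ hw₂ hnz₂ hb₂ hle
  have := hw₁.two_mul_le_length hu₁ hnz₁ hb₁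
  have := hw₂.two_mul_le_length hu₂ hnz₂ hb₂
  omega

/-- In the dual of the `L×L` torus (`L ≥ 4` even), a
non-contractible closed curve (nonzero winding number in some direction) has
at least `L` edges in that direction; hence, since contour curves have an
equal number of horizontal and vertical edges, each non-contractible contour
curve has length at least `2L`; and a stripe region, whose contour contains
two disjoint non-contractible closed curves, has contour length `≥ 4L`. -/
theorem stmt_11 (L : ℕ) (hL : 4 ≤ L) (hLeven : Even L) :
    (∀ (steps : List (ℤ × ℤ)) (w1 w2 : ℤ),
      UnitSteps steps → Winding L steps w1 w2 → (w1 ≠ 0 ∨ w2 ≠ 0) →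
      ((w1 ≠ 0 → L ≤ (steps.filter (fun d => d.2 = 0)).length) ∧
       (w2 ≠ 0 → L ≤ (steps.filter (fun d => d.1 = 0)).length)) ∧
      (BalancedSteps steps → 2 * L ≤ steps.length)) ∧
    (∀ (s₁ s₂ : List (ℤ × ℤ)) (w1 w2 w1' w2' : ℤ) (cR : ℕ),
      UnitSteps s₁ → Winding L s₁ w1 w2 → (w1 ≠ 0 ∨ w2 ≠ 0) → BalancedSteps s₁ →
      UnitSteps s₂ → Winding L s₂ w1' w2' → (w1' ≠ 0 ∨ w2' ≠ 0) → BalancedSteps s₂ →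
      -- the contour of the stripe contains both disjoint curves
      s₁.length + s₂.length ≤ cR →
      4 * L ≤ cR) :=
  stmt_11_general L
end

section
/- For the L×L toric grid (L ≥ 4 even), the communication height between the two maximum independent sets satisfies Γ = φ(E,O) = L + 1. -/
open scoped Classical

/-- `I` is an independent set of the toric grid. -/
def Indep (L : ℕ) (I : Finset (ZMod L × ZMod L)) : Prop :=
  ∀ u ∈ I, ∀ v ∈ I, ¬ (torus L).Adj u v

/-- The efficiency gap `Δ(I) = L²/2 − |I|`. -/
def gap (L : ℕ) (I : Finset (ZMod L × ZMod L)) : ℕ := L ^ 2 / 2 - I.card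

/-- `ω` is a path of independent sets from `I` to `I'` in which consecutive
configurations differ by a single flip (adding or removing one vertex). -/
def IsFlipPath (L : ℕ) (ω : List (Finset (ZMod L × ZMod L)))
    (I I' : Finset (ZMod L × ZMod L)) : Prop :=
  ω ≠ [] ∧ ω.head? = some I ∧ ω.getLast? = some I' ∧
  (∀ J ∈ ω, Indep L J) ∧
  ω.Chain' (fun J K => (symmDiff J K).card = 1)

/-- The communication height `φ(I,I') = min over paths `ω : I → I'` of
`max_{J ∈ ω} Δ(J)`. -/
noncomputable def commHeight (L : ℕ) (I I' : Finset (ZMod L × ZMod L)) : ℕ :=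
  sInf {b : ℕ | ∃ ω, IsFlipPath L ω I I' ∧ ∀ J ∈ ω, gap L J ≤ b}

/-!
Upper bound: delete the even vertices of the first two columns (gap `L`), then visit the positions
column by column and replace the even vertex one column to the right of each odd position by that
odd vertex. Every configuration of this sweep is independent with gap at most `L + 1`, and at the
end only odd vertices are left, so the rest of `O` can be added.

Lower bound: say that `J` contains an even (odd) line if it contains every even (odd) vertex of some
row or column. An independent set of gap `< L` contains an even or odd line in every direction, and
cannot contain an even line and an odd line that cross. On a path of gap `≤ L` from `E` to `O`, let
`A` be the first configuration containing an odd line and `B`, `C` the two before it. Then `B`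
contains no line (an even line of `B` would be one of `A`), so it has gap exactly `L`; hence
`A = B + w`, and `C = B + u` has gap `< L` and contains even lines. One of these crosses the odd line of `A`, and the neighbours of the crossing
vertex force an edge inside `A` or inside `C`.
-/

theorem ZMod.forall_of_add_one {n : ℕ} [NeZero n] {p : ZMod n → Prop} (h0 : p 0)
    (h : ∀ t, p t → p (t + 1)) (t : ZMod n) : p t := by
  suffices ∀ k : ℕ, p k by simpa using this t.val
  intro k
  induction k with
  | zero => simpa using h0
  | succ k ih => simpa using h _ ih

namespace ToricGrid

open Finset

variable {L : ℕ}

lemma torus_adj_iff {u v : ZMod L × ZMod L} :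
    (torus L).Adj u v ↔
      u ≠ v ∧ (u = v + (0, 1) ∨ u = v + (1, 0) ∨ v = u + (0, 1) ∨ v = u + (1, 0)) := by
  simp only [torus, SimpleGraph.fromRel_adj, Prod.ext_iff, Prod.fst_add, Prod.snd_add, add_zero]
  tauto

lemma Indep.mono {X Y : Finset (ZMod L × ZMod L)} (hY : Indep L Y) (h : X ⊆ Y) : Indep L X :=
  fun u hu v hv => hY u (h hu) v (h hv)

lemma gap_anti {X Y : Finset (ZMod L × ZMod L)} (h : X ⊆ Y) : gap L Y ≤ gap L X :=
  Nat.sub_le_sub_left (card_le_card h) _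

lemma two_mul_sq_div_two (hL : Even L) : 2 * (L ^ 2 / 2) = L * L := by
  obtain ⟨k, rfl⟩ := hL
  rw [show (k + k) ^ 2 = 2 * (2 * k * k) by ring, Nat.mul_div_cancel_left _ two_pos]
  ring

lemma eq_insert_or_eq_insert_of_card_symmDiff {X Y : Finset (ZMod L × ZMod L)}
    (h : (symmDiff X Y).card = 1) : (∃ a ∉ X, Y = insert a X) ∨ (∃ a ∉ Y, X = insert a Y) := by
  obtain ⟨a, ha⟩ := card_eq_one.1 h
  have hx : ∀ x, x ≠ a → (x ∈ X ↔ x ∈ Y) := fun x hx => by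
    have : x ∉ symmDiff X Y := by simp [ha, hx]
    rw [mem_symmDiff] at this
    tauto
  rcases mem_symmDiff.1 (show a ∈ symmDiff X Y by simp [ha]) with ⟨haX, haY⟩ | ⟨haY, haX⟩
  · refine .inr ⟨a, haY, ext fun x => ?_⟩
    by_cases hxa : x = a <;> simp_all
  · refine .inl ⟨a, haX, ext fun x => ?_⟩
    by_cases hxa : x = a <;> simp_all

lemma card_symmDiff_insert {a : ZMod L × ZMod L} {Z : Finset (ZMod L × ZMod L)} (ha : a ∉ Z) :
    (symmDiff (insert a Z) Z).card = 1 := by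
  rw [card_eq_one]
  exact ⟨a, by ext x; by_cases x = a <;> simp_all [mem_symmDiff]⟩

def FlipStep (L B : ℕ) (X Y : Finset (ZMod L × ZMod L)) : Prop :=
  Indep L X ∧ gap L X ≤ B ∧ Indep L Y ∧ gap L Y ≤ B ∧ (symmDiff X Y).card = 1

instance (B : ℕ) : Std.Symm (FlipStep L B) where
  symm _ _ := fun ⟨hX, hgX, hY, hgY, h⟩ => ⟨hY, hgY, hX, hgX, by rwa [symmDiff_comm]⟩

lemma exists_flipPath_iff {B : ℕ} {X Y : Finset (ZMod L × ZMod L)} :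
    (∃ ω, IsFlipPath L ω X Y ∧ ∀ J ∈ ω, gap L J ≤ B) ↔
      Indep L X ∧ gap L X ≤ B ∧ Relation.ReflTransGen (FlipStep L B) X Y := by
  constructor
  · rintro ⟨_ | ⟨X', l⟩, ⟨hne, hhead, hlast, hind, hchain⟩, hgap⟩
    · exact absurd rfl hne
    obtain rfl : X' = X := by simpa using hhead
    refine ⟨hind X' List.mem_cons_self, hgap X' List.mem_cons_self,
      List.relationReflTransGen_of_exists_isChain_cons l ?_ ?_⟩
    · exact hchain.imp_of_mem_imp fun J K hJ hK h =>
        ⟨hind J hJ, hgap J hJ, hind K hK, hgap K hK, h⟩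
    · simpa [List.getLast?_eq_some_getLast] using hlast
  · rintro ⟨hX, hgX, h⟩
    obtain ⟨l, hchain, hlast⟩ := List.exists_isChain_cons_of_relationReflTransGen h
    have hvalid : ∀ J ∈ X :: l, Indep L J ∧ gap L J ≤ B :=
      hchain.induction _ _ (fun _ _ h _ => ⟨h.2.2.1, h.2.2.2.1⟩) fun _ => ⟨hX, hgX⟩
    refine ⟨X :: l, ⟨List.cons_ne_nil _ _, rfl, ?_, fun J hJ => (hvalid J hJ).1,
      hchain.imp fun _ _ h => h.2.2.2.2⟩, fun J hJ => (hvalid J hJ).2⟩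
    simp [List.getLast?_eq_some_getLast, hlast]

lemma reflTransGen_flipStep_of_subset {B : ℕ} {X Y : Finset (ZMod L × ZMod L)}
    (hX : Indep L X) (hYX : Y ⊆ X) (hY : gap L Y ≤ B) :
    Relation.ReflTransGen (FlipStep L B) X Y := by
  suffices ∀ S : Finset _, Indep L (Y ∪ S) → Relation.ReflTransGen (FlipStep L B) (Y ∪ S) Y by
    simpa [union_eq_right.2 hYX] using this X (by rwa [union_eq_right.2 hYX])
  intro S
  induction S using Finset.induction_on with
  | empty => intro _; rw [union_empty]
  | insert a S _ ih =>
    intro hind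
    rw [union_insert] at hind ⊢
    have hS : Indep L (Y ∪ S) := Indep.mono hind (subset_insert _ _)
    by_cases ha : a ∈ Y ∪ S
    · rw [insert_eq_of_mem ha]
      exact ih hS
    · refine .head ⟨hind, ?_, hS, ?_, card_symmDiff_insert ha⟩ (ih hS)
      · exact (gap_anti (subset_union_left.trans (subset_insert _ _))).trans hY
      · exact (gap_anti subset_union_left).trans hY

lemma reflTransGen_flipStep_of_inter {B : ℕ} {X Y : Finset (ZMod L × ZMod L)}
    (hX : Indep L X) (hY : Indep L Y) (hXY : gap L (X ∩ Y) ≤ B) :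
    Relation.ReflTransGen (FlipStep L B) X Y :=
  (reflTransGen_flipStep_of_subset hX inter_subset_left hXY).trans <| Std.Symm.symm _ _ <|
    reflTransGen_flipStep_of_subset hY inter_subset_right hXY

def IsLine (ℓ : ZMod L → ZMod L × ZMod L) : Prop :=
  Function.Injective ℓ ∧ ∀ t, (torus L).Adj (ℓ t) (ℓ (t + 1))

lemma isLine_col (hL : 1 < L) (c : ZMod L) : IsLine (Prod.mk c) := by
  have : Fact (1 < L) := ⟨hL⟩
  exact ⟨Prod.mk_right_injective c, fun t => torus_adj_iff.2 ⟨by simp, by simp⟩⟩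

lemma isLine_row (hL : 1 < L) (r : ZMod L) : IsLine fun t : ZMod L => (t, r) := by
  have : Fact (1 < L) := ⟨hL⟩
  exact ⟨Prod.mk_left_injective r, fun t => torus_adj_iff.2 ⟨by simp, by simp⟩⟩

lemma isLine_neighbours (hL : 2 < L) {ℓ : ZMod L → ZMod L × ZMod L} (hℓ : IsLine ℓ)
    (t : ZMod L) :
    ℓ (t + 1) ≠ ℓ (t - 1) ∧ (torus L).Adj (ℓ t) (ℓ (t + 1)) ∧ (torus L).Adj (ℓ t) (ℓ (t - 1)) := by
  have : Fact (2 < L) := ⟨hL⟩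
  refine ⟨fun h => ZMod.neg_one_ne_one (n := L) ?_, hℓ.2 t, by simpa using (hℓ.2 (t - 1)).symm⟩
  have := hℓ.1 h
  rw [sub_eq_add_neg, add_left_cancel_iff] at this
  exact this.symm

lemma false_of_two_neighbours_mem {A C : Finset (ZMod L × ZMod L)} {u x p q : ZMod L × ZMod L}
    (hA : Indep L A) (hCA : C ⊆ insert u A) (hx : x ∈ A) (hpq : p ≠ q) (hp : p ∈ C)
    (hq : q ∈ C) (hxp : (torus L).Adj x p) (hxq : (torus L).Adj x q) : False := by
  by_cases hpu : p = u
  · exact hA x hx q ((mem_insert.1 (hCA hq)).resolve_left (hpu ▸ hpq.symm)) hxq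
  · exact hA x hx p ((mem_insert.1 (hCA hp)).resolve_left hpu) hxp

variable [NeZero L]

lemma even_val_add_one (hL : Even L) (x : ZMod L) : Even (x + 1).val ↔ ¬ Even x.val := by
  have h1 : (1 : ZMod L).val = 1 := ZMod.val_one'' fun h => Nat.not_even_one (h ▸ hL)
  rw [ZMod.val_add, Nat.even_iff, Nat.mod_mod_of_dvd _ (even_iff_two_dvd.1 hL), ← Nat.even_iff,
    h1, Nat.even_add_one]

lemma isEvenVertex_add_fst (hL : Even L) (v : ZMod L × ZMod L) :
    isEvenVertex (v + (1, 0)) ↔ ¬ isEvenVertex v := by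
  simp only [isEvenVertex, Prod.fst_add, Prod.snd_add, add_zero, Nat.even_add,
    even_val_add_one hL]
  tauto

lemma isEvenVertex_add_snd (hL : Even L) (v : ZMod L × ZMod L) :
    isEvenVertex (v + (0, 1)) ↔ ¬ isEvenVertex v := by
  simp only [isEvenVertex, Prod.fst_add, Prod.snd_add, add_zero, Nat.even_add,
    even_val_add_one hL]
  tauto

lemma isEvenVertex_iff_not_of_adj (hL : Even L) {u v : ZMod L × ZMod L}
    (h : (torus L).Adj u v) : isEvenVertex u ↔ ¬ isEvenVertex v := by
  rcases (torus_adj_iff.1 h).2 with rfl | rfl | rfl | rfl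
  · exact isEvenVertex_add_snd hL v
  · exact isEvenVertex_add_fst hL v
  · rw [isEvenVertex_add_snd hL]; tauto
  · rw [isEvenVertex_add_fst hL]; tauto

lemma indep_of_forall_isEvenVertex_iff (hL : Even L) {X : Finset (ZMod L × ZMod L)} (p : Prop)
    (h : ∀ v ∈ X, isEvenVertex v ↔ p) : Indep L X := fun u hu v hv huv => by
  have := isEvenVertex_iff_not_of_adj hL huv
  rw [h u hu, h v hv] at this
  tauto

lemma indep_evenClass (hL : Even L) : Indep L (evenClass L) :=
  indep_of_forall_isEvenVertex_iff hL True fun v hv => by simpa [evenClass] using hv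

lemma indep_oddClass (hL : Even L) : Indep L (oddClass L) :=
  indep_of_forall_isEvenVertex_iff hL False fun v hv => by simpa [oddClass] using hv

lemma two_mul_card_evenClass (hL : Even L) : 2 * (evenClass L).card = L ^ 2 := by
  have hodd : oddClass L = (evenClass L).image (· + (1, 0)) := by
    ext v
    simp only [oddClass, evenClass, mem_filter, mem_univ, true_and, mem_image]
    refine ⟨fun hv => ⟨v - (1, 0), ?_, sub_add_cancel v _⟩, ?_⟩
    · rwa [← not_not (a := isEvenVertex _), ← isEvenVertex_add_fst hL, sub_add_cancel]
    · rintro ⟨x, hx, rfl⟩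
      exact fun h => (isEvenVertex_add_fst hL x).1 h hx
  have hsum := card_filter_add_card_filter_not (s := univ)
    fun v : ZMod L × ZMod L => isEvenVertex v
  rw [← evenClass, ← oddClass, hodd, card_image_of_injective _ (add_left_injective _), card_univ,
    Fintype.card_prod, ZMod.card] at hsum
  rw [sq, ← hsum, two_mul]

lemma gap_evenClass (hL : Even L) : gap L (evenClass L) = 0 := by
  have := two_mul_card_evenClass hL
  unfold gap
  omega

def ContainsEvens (J : Finset (ZMod L × ZMod L)) (ℓ : ZMod L → ZMod L × ZMod L) : Prop :=
  ∀ t, isEvenVertex (ℓ t) → ℓ t ∈ J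

def ContainsOdds (J : Finset (ZMod L × ZMod L)) (ℓ : ZMod L → ZMod L × ZMod L) : Prop :=
  ∀ t, ¬ isEvenVertex (ℓ t) → ℓ t ∈ J

section Line

variable {J : Finset (ZMod L × ZMod L)} {ℓ : ZMod L → ZMod L × ZMod L}

lemma card_line_union_image_add_one (hJ : Indep L J) (hℓ : IsLine ℓ) :
    ((univ.filter fun t => ℓ t ∈ J) ∪ (univ.filter fun t => ℓ t ∈ J).image (· + 1)).card =
      2 * (univ.filter fun t => ℓ t ∈ J).card := by
  rw [card_union_of_disjoint, card_image_of_injective _ (add_left_injective 1), two_mul]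
  simp only [disjoint_left, mem_filter, mem_univ, true_and, mem_image, not_exists, not_and]
  rintro _ ht s hs rfl
  exact hJ _ hs _ ht (hℓ.2 s)

lemma two_mul_card_line_le (hJ : Indep L J) (hℓ : IsLine ℓ) :
    2 * (univ.filter fun t => ℓ t ∈ J).card ≤ L := by
  rw [← card_line_union_image_add_one hJ hℓ]
  simpa using card_le_univ (α := ZMod L) _

/-- A line carrying `L / 2` vertices of `J` alternates in and out of `J`, as parity does along
it. -/
lemma containsEvens_or_containsOdds (hL : Even L) (hJ : Indep L J) (hℓ : IsLine ℓ)
    (hfull : 2 * (univ.filter fun t => ℓ t ∈ J).card = L) :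
    ContainsEvens J ℓ ∨ ContainsOdds J ℓ := by
  have hcover := eq_univ_of_card _
    ((card_line_union_image_add_one hJ hℓ).trans (hfull.trans (ZMod.card L).symm))
  have halt : ∀ t, ℓ (t + 1) ∈ J ↔ ℓ t ∉ J := by
    intro t
    have := hcover ▸ mem_univ (t + 1)
    simp only [mem_union, mem_filter, mem_univ, true_and, mem_image, add_left_inj,
      exists_eq_right] at this
    exact ⟨fun h ht => hJ _ ht _ h (hℓ.2 t), this.resolve_right⟩
  have hpar : ∀ t, (ℓ t ∈ J ↔ isEvenVertex (ℓ t)) ↔ (ℓ 0 ∈ J ↔ isEvenVertex (ℓ 0)) := by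
    refine ZMod.forall_of_add_one Iff.rfl fun t ht => ?_
    rw [← ht, halt, isEvenVertex_iff_not_of_adj hL (hℓ.2 t).symm]
    tauto
  by_cases h0 : ℓ 0 ∈ J ↔ isEvenVertex (ℓ 0)
  · exact .inl fun t => ((hpar t).2 h0).2
  · exact .inr fun t ht => by have := hpar t; tauto

end Line

lemma card_eq_sum_card_line (e : ZMod L × ZMod L ≃ ZMod L × ZMod L)
    (J : Finset (ZMod L × ZMod L)) : J.card = ∑ c, (univ.filter fun t => e (c, t) ∈ J).card := by
  simp only [card_filter]
  rw [← Fintype.sum_prod_type' (fun c t => if e (c, t) ∈ J then 1 else 0),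
    Equiv.sum_comp e (fun v => if v ∈ J then 1 else 0), ← card_filter, filter_mem_eq_inter,
    univ_inter]

/-- Pigeonhole over the parallel lines `t ↦ e (c, t)`: if none contains all even or all odd
vertices, each carries at most `L / 2 - 1` vertices of `J`. -/
lemma exists_containsEvens_or_containsOdds (hL : Even L) (e : ZMod L × ZMod L ≃ ZMod L × ZMod L)
    (he : ∀ c, IsLine fun t => e (c, t)) {J : Finset (ZMod L × ZMod L)} (hJ : Indep L J)
    (hgap : gap L J < L) :
    ∃ c, ContainsEvens J (fun t => e (c, t)) ∨ ContainsOdds J (fun t => e (c, t)) := by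
  by_contra! h
  have hline : ∀ c, 2 * (univ.filter fun t => e (c, t) ∈ J).card + 2 ≤ L := by
    intro c
    have hle := two_mul_card_line_le hJ (he c)
    have hne : 2 * (univ.filter fun t => e (c, t) ∈ J).card ≠ L := fun hfull =>
      (containsEvens_or_containsOdds hL hJ (he c) hfull).elim (h c).1 (h c).2
    obtain ⟨k, rfl⟩ := hL
    omega
  have hsum : 2 * J.card + 2 * L ≤ L * L :=
    calc 2 * J.card + 2 * L
        = ∑ c : ZMod L, (2 * (univ.filter fun t => e (c, t) ∈ J).card + 2) := by
          rw [card_eq_sum_card_line e J, sum_add_distrib, mul_sum, sum_const, card_univ,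
            ZMod.card, smul_eq_mul, mul_comm]
      _ ≤ ∑ _c : ZMod L, L := sum_le_sum fun c _ => hline c
      _ = L * L := by rw [sum_const, card_univ, ZMod.card, smul_eq_mul]
  have := two_mul_sq_div_two hL
  unfold gap at hgap
  omega

lemma exists_col (hL : Even L) (hL1 : 1 < L) {J : Finset (ZMod L × ZMod L)} (hJ : Indep L J)
    (hgap : gap L J < L) : ∃ c, ContainsEvens J (Prod.mk c) ∨ ContainsOdds J (Prod.mk c) :=
  exists_containsEvens_or_containsOdds hL (Equiv.refl _) (isLine_col hL1) hJ hgap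

lemma exists_row (hL : Even L) (hL1 : 1 < L) {J : Finset (ZMod L × ZMod L)} (hJ : Indep L J)
    (hgap : gap L J < L) :
    ∃ r, ContainsEvens J (fun t => (t, r)) ∨ ContainsOdds J (fun t => (t, r)) :=
  exists_containsEvens_or_containsOdds hL (Equiv.prodComm _ _) (isLine_row hL1) hJ hgap

/-- At the crossing vertex, whichever of `A` and `C` contains it also contains, up to the one vertex
by which it differs from the other set, both of its neighbours along the other line. -/
lemma false_of_containsEvens_containsOdds (hL : Even L) (hL2 : 2 < L)
    {A C : Finset (ZMod L × ZMod L)} {u w : ZMod L × ZMod L} (hA : Indep L A) (hC : Indep L C)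
    (hAC : A ⊆ insert w C) (hCA : C ⊆ insert u A) {ℓ m : ZMod L → ZMod L × ZMod L}
    (hℓ : IsLine ℓ) (hm : IsLine m) {s t : ZMod L} (hst : ℓ s = m t)
    (hCℓ : ContainsEvens C ℓ) (hAm : ContainsOdds A m) : False := by
  obtain ⟨hℓne, hℓ₁, hℓ₂⟩ := isLine_neighbours hL2 hℓ s
  obtain ⟨hmne, hm₁, hm₂⟩ := isLine_neighbours hL2 hm t
  by_cases hx : isEvenVertex (ℓ s)
  · have hodd : ∀ t', (torus L).Adj (m t) (m t') → m t' ∈ A := fun t' h =>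
      hAm t' ((isEvenVertex_iff_not_of_adj hL h).1 (hst ▸ hx))
    exact false_of_two_neighbours_mem hC hAC (hCℓ s hx) hmne (hodd _ hm₁) (hodd _ hm₂)
      (hst ▸ hm₁) (hst ▸ hm₂)
  · have heven : ∀ s', (torus L).Adj (ℓ s) (ℓ s') → ℓ s' ∈ C := fun s' h =>
      hCℓ s' (not_not.1 fun h' => hx ((isEvenVertex_iff_not_of_adj hL h).2 h'))
    exact false_of_two_neighbours_mem hA hCA (hst ▸ hAm t (hst ▸ hx)) hℓne (heven _ hℓ₁)
      (heven _ hℓ₂) hℓ₁ hℓ₂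

def HasEvenLine (J : Finset (ZMod L × ZMod L)) : Prop :=
  ∃ c, ContainsEvens J (Prod.mk c) ∨ ContainsEvens J fun t => (t, c)

def HasOddLine (J : Finset (ZMod L × ZMod L)) : Prop :=
  ∃ c, ContainsOdds J (Prod.mk c) ∨ ContainsOdds J fun t => (t, c)

lemma HasEvenLine.mono {X Y : Finset (ZMod L × ZMod L)} (h : X ⊆ Y) (hX : HasEvenLine X) :
    HasEvenLine Y := by
  obtain ⟨c, hc | hc⟩ := hX
  exacts [⟨c, .inl fun t ht => h (hc t ht)⟩, ⟨c, .inr fun t ht => h (hc t ht)⟩]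

lemma HasOddLine.mono {X Y : Finset (ZMod L × ZMod L)} (h : X ⊆ Y) (hX : HasOddLine X) :
    HasOddLine Y := by
  obtain ⟨c, hc | hc⟩ := hX
  exacts [⟨c, .inl fun t ht => h (hc t ht)⟩, ⟨c, .inr fun t ht => h (hc t ht)⟩]

lemma not_hasOddLine_evenClass (hL : Even L) (hL1 : 1 < L) : ¬ HasOddLine (evenClass L) := by
  have hline : ∀ ℓ : ZMod L → ZMod L × ZMod L, IsLine ℓ → ¬ ContainsOdds (evenClass L) ℓ := by
    intro ℓ hℓ h
    have hE : ∀ t, isEvenVertex (ℓ t) := fun t => by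
      by_contra ht
      simpa [evenClass, ht] using h t ht
    exact (isEvenVertex_iff_not_of_adj hL (hℓ.2 0)).1 (hE 0) (hE _)
  rintro ⟨c, hc | hc⟩
  exacts [hline _ (isLine_col hL1 c) hc, hline _ (isLine_row hL1 c) hc]

lemma hasOddLine_oddClass : HasOddLine (oddClass L) :=
  ⟨0, .inl fun t ht => by simpa [oddClass] using ht⟩

lemma not_hasEvenLine_and_hasOddLine (hL : Even L) (hL2 : 2 < L) {J : Finset (ZMod L × ZMod L)}
    (hJ : Indep L J) (hgap : gap L J < L) (hE : HasEvenLine J) (hO : HasOddLine J) : False := by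
  have colRow : ∀ a r, ContainsEvens J (Prod.mk a) → ContainsOdds J (fun t => (t, r)) → False :=
    fun a r => false_of_containsEvens_containsOdds hL hL2 hJ hJ (subset_insert (a, r) J)
      (subset_insert (a, r) J) (isLine_col (by omega) a) (isLine_row (by omega) r) rfl
  have rowCol : ∀ b c, ContainsEvens J (fun t => (t, b)) → ContainsOdds J (Prod.mk c) → False :=
    fun b c => false_of_containsEvens_containsOdds hL hL2 hJ hJ (subset_insert (c, b) J)
      (subset_insert (c, b) J) (isLine_row (by omega) b) (isLine_col (by omega) c)
      (s := c) (t := b) rfl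
  obtain ⟨c₀, hc₀⟩ := exists_col hL (by omega) hJ hgap
  obtain ⟨r₀, hr₀⟩ := exists_row hL (by omega) hJ hgap
  obtain ⟨a, ha | ha⟩ := hE <;> obtain ⟨b, hb | hb⟩ := hO
  · exact hr₀.elim (rowCol r₀ b · hb) (colRow a r₀ ha)
  · exact colRow a b ha hb
  · exact rowCol a b ha hb
  · exact hc₀.elim (colRow c₀ b · hb) (rowCol a c₀ ha)

lemma gap_eq_and_eq_insert_of_flipStep (hL : Even L) (hL2 : 2 < L)
    {A B : Finset (ZMod L × ZMod L)} (hBA : FlipStep L L B A) (hB : ¬ HasOddLine B)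
    (hA : HasOddLine A) : gap L B = L ∧ ∃ w, A = insert w B := by
  obtain ⟨hBi, hBg, hAi, -, hcard⟩ := hBA
  obtain ⟨w, -, rfl⟩ | ⟨w, -, rfl⟩ := eq_insert_or_eq_insert_of_card_symmDiff hcard
  · refine ⟨le_antisymm hBg (not_lt.1 fun hlt => ?_), w, rfl⟩
    obtain ⟨c, hc | hc⟩ := exists_col hL (by omega) hBi hlt
    · exact not_hasEvenLine_and_hasOddLine hL hL2 hAi
        ((gap_anti (subset_insert w B)).trans_lt hlt)
        (HasEvenLine.mono (subset_insert w B) ⟨c, .inl hc⟩) hA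
    · exact hB ⟨c, .inl hc⟩
  · exact absurd (HasOddLine.mono (subset_insert w A) hA) hB

lemma false_of_flipSteps (hL : Even L) (hL2 : 2 < L) {A B C : Finset (ZMod L × ZMod L)}
    (hCB : FlipStep L L C B) (hBA : FlipStep L L B A) (hC : ¬ HasOddLine C)
    (hB : ¬ HasOddLine B) (hA : HasOddLine A) : False := by
  obtain ⟨hgB, w, rfl⟩ := gap_eq_and_eq_insert_of_flipStep hL hL2 hBA hB hA
  obtain ⟨hCi, hCg, -, -, hcard⟩ := hCB
  obtain ⟨hAi, -⟩ := hBA.2.2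
  obtain ⟨u, hu, rfl⟩ | ⟨u, hu, rfl⟩ := eq_insert_or_eq_insert_of_card_symmDiff hcard
  · unfold gap at hgB hCg
    rw [card_insert_of_notMem hu] at hgB
    omega
  have hgC : gap L (insert u B) < L := by
    unfold gap at hgB ⊢
    rw [card_insert_of_notMem hu]
    omega
  have hAC : insert w B ⊆ insert w (insert u B) := insert_subset_insert _ (subset_insert _ _)
  have hCA : insert u B ⊆ insert u (insert w B) := insert_subset_insert _ (subset_insert _ _)
  obtain ⟨a, ha | ha⟩ := exists_col hL (by omega) hCi hgC
  swap; · exact hC ⟨a, .inl ha⟩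
  obtain ⟨b, hb | hb⟩ := exists_row hL (by omega) hCi hgC
  swap; · exact hC ⟨b, .inr hb⟩
  obtain ⟨c, hc | hc⟩ := hA
  · exact false_of_containsEvens_containsOdds hL hL2 hAi hCi hAC hCA (isLine_row (by omega) b)
      (isLine_col (by omega) c) (s := c) (t := b) rfl hb hc
  · exact false_of_containsEvens_containsOdds hL hL2 hAi hCi hAC hCA (isLine_col (by omega) a)
      (isLine_row (by omega) c) (s := c) (t := a) rfl ha hc

theorem not_reflTransGen_evenClass_oddClass (hL : Even L) (hL2 : 2 < L) :
    ¬ Relation.ReflTransGen (FlipStep L L) (evenClass L) (oddClass L) := by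
  intro h
  suffices ∀ X, Relation.ReflTransGen (FlipStep L L) (evenClass L) X → ¬ HasOddLine X ∧
      (gap L X < L ∨ ∃ W, ¬ HasOddLine W ∧ FlipStep L L W X) from
    (this _ h).1 hasOddLine_oddClass
  intro X hX
  induction hX with
  | refl => exact ⟨not_hasOddLine_evenClass hL (by omega), .inl (by rw [gap_evenClass hL]; omega)⟩
  | tail _ hXY ih =>
    obtain ⟨hX, hgap | ⟨W, hW, hWX⟩⟩ := ih
    · refine ⟨fun hY => ?_, .inr ⟨_, hX, hXY⟩⟩
      have := (gap_eq_and_eq_insert_of_flipStep hL hL2 hXY hX hY).1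
      omega
    · exact ⟨fun hY => false_of_flipSteps hL hL2 hWX hXY hW hX hY, .inr ⟨_, hX, hXY⟩⟩

lemma val_add_one_eq (x : ZMod L) : (x + 1).val = x.val + 1 ∨ (x + 1).val = 0 := by
  have h : (x + 1).val = (x.val + 1) % L := by
    rw [ZMod.val_add, ZMod.val_one_eq_one_mod, Nat.add_mod_mod]
  rcases (Nat.succ_le_of_lt x.val_lt).lt_or_eq with hlt | heq
  · exact .inl (h.trans (Nat.mod_eq_of_lt hlt))
  · exact .inr (by rw [h, Nat.mod_eq_zero_of_dvd ⟨1, by omega⟩])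

/-- Position of a vertex when the torus is read column by column. -/
def key (v : ZMod L × ZMod L) : ℕ := v.1.val * L + v.2.val

lemma key_injective : Function.Injective (key (L := L)) := by
  intro u v h
  unfold key at h
  have h2 : u.2.val = v.2.val := by
    simpa [Nat.mul_add_mod', Nat.mod_eq_of_lt u.2.val_lt, Nat.mod_eq_of_lt v.2.val_lt] using
      congrArg (· % L) h
  have h1 : u.1.val = v.1.val := Nat.eq_of_mul_eq_mul_right (NeZero.pos L) (by omega)
  exact Prod.ext (ZMod.val_injective L h1) (ZMod.val_injective L h2)

lemma key_lt_mul_of_fst_val_le {v : ZMod L × ZMod L} {c : ℕ} (h : v.1.val ≤ c) :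
    key v < (c + 1) * L := by
  have := Nat.mul_le_mul_right L h
  have := v.2.val_lt
  unfold key
  rw [add_mul, one_mul]
  omega

lemma one_le_fst_val_of_le_key {v : ZMod L × ZMod L} (h : L ≤ key v) : 1 ≤ v.1.val := by
  by_contra! h0
  have := key_lt_mul_of_fst_val_le (v := v) (c := 0) (by omega)
  omega

lemma key_sub_fst_add {v : ZMod L × ZMod L} (hv : 1 ≤ v.1.val) :
    key (v - (1, 0)) + L = key v := by
  have hL : 1 < L := by have := v.1.val_lt; omega
  have h1 : (v.1 - 1).val = v.1.val - 1 := by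
    rw [ZMod.val_sub (by rw [ZMod.val_one_eq_one_mod, Nat.mod_eq_of_lt hL]; exact hv),
      ZMod.val_one_eq_one_mod, Nat.mod_eq_of_lt hL]
  have := Nat.le_mul_of_pos_left L hv
  simp only [key, Prod.fst_sub, Prod.snd_sub, sub_zero, h1, Nat.sub_one_mul]
  omega

lemma key_le_of_adj {u v : ZMod L × ZMod L} (h : (torus L).Adj u v) (hu : L ≤ key u) :
    key v ≤ key u + L := by
  have hu1 := one_le_fst_val_of_le_key hu
  have hkey : key u + L = (u.1.val + 1) * L + u.2.val := by unfold key; ring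
  rcases (torus_adj_iff.1 h).2 with rfl | rfl | rfl | rfl
  · simp only [Prod.fst_add, Prod.snd_add, add_zero] at hkey
    have := key_lt_mul_of_fst_val_le (v := v) le_rfl
    omega
  · simp only [Prod.fst_add, Prod.snd_add, add_zero] at hkey hu1
    have : v.1.val ≤ (v.1 + 1).val := by
      rcases val_add_one_eq v.1 with h' | h' <;> omega
    have := key_lt_mul_of_fst_val_le this
    omega
  · have := key_lt_mul_of_fst_val_le (v := u + (0, 1)) (c := u.1.val) (by simp)
    omega
  · have : (u.1 + 1).val ≤ u.1.val + 1 := by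
      rcases val_add_one_eq u.1 with h' | h' <;> omega
    have := Nat.mul_le_mul_right L this
    simp only [key, Prod.fst_add, Prod.snd_add, add_zero] at hkey ⊢
    omega

/-- The sweep after position `p`; the gap of one column between its odd and its even part keeps it
independent. -/
noncomputable def sweep (L p : ℕ) [NeZero L] : Finset (ZMod L × ZMod L) :=
  univ.filter fun v =>
    (¬ isEvenVertex v ∧ L ≤ key v ∧ key v < p) ∨ (isEvenVertex v ∧ p + L ≤ key v)

lemma mem_sweep {p : ℕ} {v : ZMod L × ZMod L} : v ∈ sweep L p ↔
    (¬ isEvenVertex v ∧ L ≤ key v ∧ key v < p) ∨ (isEvenVertex v ∧ p + L ≤ key v) := by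
  simp [sweep]

lemma indep_sweep (hL : Even L) (p : ℕ) : Indep L (sweep L p) := by
  have hodd : ∀ u ∈ sweep L p, ∀ v ∈ sweep L p, ¬ isEvenVertex u → ¬ (torus L).Adj u v := by
    intro u hu v hv hu' huv
    have hpar := isEvenVertex_iff_not_of_adj hL huv
    rw [mem_sweep] at hu hv
    have := key_le_of_adj huv (by tauto)
    have : p + L ≤ key v := by tauto
    have : key u < p := by tauto
    omega
  intro u hu v hv huv
  by_cases hu' : isEvenVertex u
  · exact hodd v hv u hu ((isEvenVertex_iff_not_of_adj hL huv).1 hu') huv.symm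
  · exact hodd u hu v hv hu' huv

lemma card_evenClass_filter_key_lt_le :
    ((evenClass L).filter fun v => key v < 2 * L).card ≤ L := by
  have hcol : ∀ v ∈ (evenClass L).filter fun v => key v < 2 * L, v.1.val ≤ 1 := by
    intro v hv
    have : v.1.val * L < 2 * L := lt_of_le_of_lt (Nat.le_add_right _ _) (mem_filter.1 hv).2
    have := Nat.lt_of_mul_lt_mul_right this
    omega
  calc _ ≤ (univ : Finset (ZMod L)).card :=
        card_le_card_of_injOn Prod.snd (fun _ _ => mem_univ _) fun u hu v hv h => by
          have hu' := hcol u hu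
          have hv' := hcol v hv
          simp only [mem_coe, evenClass, mem_filter, mem_univ, true_and, isEvenVertex,
            Nat.even_iff] at hu hv
          have h2 : u.2 = v.2 := h
          rw [h2] at hu
          exact Prod.ext (ZMod.val_injective L (by omega)) h2
    _ = L := by rw [card_univ, ZMod.card]

/-- Moving every even vertex outside the first two columns that the sweep has passed one column to
the left injects all but at most `L` even vertices into `sweep L p`. -/
lemma sq_div_two_le_card_sweep_add (hL : Even L) (p : ℕ) :
    L ^ 2 / 2 ≤ (sweep L p).card + L := by
  have := card_filter_add_card_filter_not (s := evenClass L) fun v => key v < 2 * L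
  set E₂ := (evenClass L).filter fun v => ¬ key v < 2 * L
  have hE₂ : E₂.card ≤ (sweep L p).card := by
    refine card_le_card_of_injOn (fun v => if p + L ≤ key v then v else v - (1, 0)) ?_ ?_
    · intro v hv
      simp only [E₂, mem_coe, evenClass, mem_filter, mem_univ, true_and, not_lt] at hv
      have hkey := key_sub_fst_add (one_le_fst_val_of_le_key (v := v) (by omega))
      simp only [mem_coe, mem_sweep]
      split_ifs with h
      · exact .inr ⟨hv.1, h⟩
      · exact .inl ⟨fun h' => (isEvenVertex_add_fst hL _).1 (by simpa using hv.1) h',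
          by omega, by omega⟩
    · intro u hu v hv h
      simp only [E₂, mem_coe, mem_filter, not_lt] at hu hv
      have hku := key_sub_fst_add (one_le_fst_val_of_le_key (v := u) (by omega))
      have hkv := key_sub_fst_add (one_le_fst_val_of_le_key (v := v) (by omega))
      dsimp only at h
      split_ifs at h with h1 h2 h2
      · exact h
      · subst h; omega
      · subst h; omega
      · exact sub_left_injective h
  have := card_evenClass_filter_key_lt_le (L := L)
  have := two_mul_card_evenClass hL
  omega

lemma gap_sweep_le (hL : Even L) (p : ℕ) : gap L (sweep L p) ≤ L := by
  have := sq_div_two_le_card_sweep_add hL p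
  unfold gap
  omega

/-- From `sweep L p` to `sweep L (p + 1)` at most the even vertex at position `p + L` leaves. -/
lemma gap_sweep_inter_sweep_succ_le (hL : Even L) (p : ℕ) :
    gap L (sweep L p ∩ sweep L (p + 1)) ≤ L + 1 := by
  have hsub : (sweep L p).filter (fun v => ¬ key v = p + L) ⊆ sweep L p ∩ sweep L (p + 1) := by
    intro v hv
    simp only [mem_filter, mem_inter, mem_sweep] at hv ⊢
    obtain ⟨h | h, hne⟩ := hv
    · exact ⟨.inl h, .inl ⟨h.1, h.2.1, by omega⟩⟩
    · exact ⟨.inr h, .inr ⟨h.1, by omega⟩⟩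
  have hone : ((sweep L p).filter fun v => key v = p + L).card ≤ 1 :=
    card_le_one.2 fun a ha b hb =>
      key_injective ((mem_filter.1 ha).2.trans (mem_filter.1 hb).2.symm)
  have := card_filter_add_card_filter_not (s := sweep L p) fun v => key v = p + L
  have := card_le_card hsub
  have := sq_div_two_le_card_sweep_add hL p
  unfold gap
  omega

theorem reflTransGen_evenClass_oddClass (hL : Even L) :
    Relation.ReflTransGen (FlipStep L (L + 1)) (evenClass L) (oddClass L) := by
  have hsweep : ∀ n, Relation.ReflTransGen (FlipStep L (L + 1)) (sweep L 0) (sweep L n) := by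
    intro n
    induction n with
    | zero => exact .refl
    | succ n ih =>
      exact ih.trans <| reflTransGen_flipStep_of_inter (indep_sweep hL n)
        (indep_sweep hL (n + 1)) (gap_sweep_inter_sweep_succ_le hL n)
  have hstart : sweep L 0 ⊆ evenClass L := fun v hv => by
    simp only [mem_sweep, not_lt_zero, and_false, false_or] at hv
    simpa [evenClass] using hv.1
  have hend : sweep L (L * L) ⊆ oddClass L := fun v hv => by
    have := key_lt_mul_of_fst_val_le (v := v) (c := L - 1) (by have := v.1.val_lt; omega)
    rw [Nat.sub_one_add_one (NeZero.ne L)] at this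
    simp only [mem_sweep] at hv
    have : ¬ isEvenVertex v := hv.elim (·.1) fun h => absurd h.2 (by omega)
    simpa [oddClass] using this
  refine .trans (.trans ?_ (hsweep (L * L))) ?_
  · refine reflTransGen_flipStep_of_inter (indep_evenClass hL) (indep_sweep hL 0) ?_
    rw [inter_eq_right.2 hstart]
    exact (gap_sweep_le hL 0).trans (Nat.le_succ L)
  · refine reflTransGen_flipStep_of_inter (indep_sweep hL _) (indep_oddClass hL) ?_
    rw [inter_eq_left.2 hend]
    exact (gap_sweep_le hL _).trans (Nat.le_succ L)

end ToricGrid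

/-- For the `L×L` toric grid (`L ≥ 4` even), the communication
height between the two maximum independent sets `E` and `O` satisfies
`Γ = φ(E,O) = L + 1`. -/
theorem stmt_14 (L : ℕ) [NeZero L] (hL : 4 ≤ L) (hLeven : Even L) :
    commHeight L (evenClass L) (oddClass L) = L + 1 := by
  have hupper : L + 1 ∈ {b : ℕ | ∃ ω, IsFlipPath L ω (evenClass L) (oddClass L) ∧
      ∀ J ∈ ω, gap L J ≤ b} :=
    ToricGrid.exists_flipPath_iff.2 ⟨ToricGrid.indep_evenClass hLeven,
      by rw [ToricGrid.gap_evenClass hLeven]; omega,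
      ToricGrid.reflTransGen_evenClass_oddClass hLeven⟩
  refine le_antisymm (Nat.sInf_le hupper) (le_csInf ⟨_, hupper⟩ fun b ⟨ω, hω, hgap⟩ => ?_)
  by_contra! hb
  have := ToricGrid.exists_flipPath_iff.1
    ⟨ω, hω, fun J hJ => Nat.le_of_lt_succ ((hgap J hJ).trans_lt hb)⟩
  exact ToricGrid.not_reflTransGen_evenClass_oddClass hLeven (by omega) this.2.2
end
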